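/- arXiv:2010.08132 — 7 statements merged into one kernel-verified Lean document; each statement's English description precedes it below -/
import Mathlib

section
/- Let ξ ~ N(0, I_m) with m ≥ 2, write ξ₁ for its first coordinate and ξ₋₁ for the remaining m−1 coordinates. Then for any γ* > 0, P(|ξ₁|/‖ξ‖ > γ*) ≤ P(‖ξ₋₁‖² ≤ (m−1)/2) + (2/(γ*·√((m−1)π)))·(1 + (γ*)²)^{−(m−1)/2}. -/
/-!
Split according to whether `S = ‖ξ₋₁‖²` exceeds `c = (m-1)/2`. On `{S > c}`, the event
`|ξ₁|/‖ξ‖ > γ` forces `|ξ₁| > γ√S`. As `ξ₁` is independent of `S`, conditioning on `S` and the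
Gaussian tail bound `P(|ξ₁| > t) ≤ 2 e^{-t²/2} / (t√(2π))` at `t = γ√S ≥ γ√c` bound the probability
of this event by `2/(γ√(2πc)) · E[e^{-γ²S/2}]`, and the chi-square moment generating function
gives `E[e^{-γ²S/2}] = (1 + γ²)^{-(m-1)/2}`.
-/

open MeasureTheory ProbabilityTheory Real Set Filter

lemma gaussianPDFReal_zero_one (x : ℝ) :
    gaussianPDFReal 0 1 x = (√(2 * π))⁻¹ * exp (-x ^ 2 / 2) := by
  simp [gaussianPDFReal]

lemma integral_Ioi_mul_exp_neg_sq_div_two (t : ℝ) :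
    ∫ x in Ioi t, x * exp (-x ^ 2 / 2) = exp (-t ^ 2 / 2) := by
  have hderiv (x : ℝ) : HasDerivAt (fun y => -exp (-y ^ 2 / 2)) (x * exp (-x ^ 2 / 2)) x := by
    have hsq : HasDerivAt (fun y : ℝ => -y ^ 2 / 2) (-(2 * x) / 2) x := by
      simpa using (hasDerivAt_pow 2 x).neg.div_const 2
    exact hsq.exp.neg.congr_deriv (by ring)
  have hlim : Tendsto (fun y => -exp (-y ^ 2 / 2)) atTop (nhds (-0)) := by
    have : Tendsto (fun y : ℝ => -y ^ 2 / 2) atTop atBot :=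
      (tendsto_neg_atTop_atBot.comp (tendsto_pow_atTop two_ne_zero)).atBot_div_const two_pos
    exact (tendsto_exp_atBot.comp this).neg
  have hint : IntegrableOn (fun x => x * exp (-x ^ 2 / 2)) (Ioi t) := by
    simpa [neg_div, div_eq_inv_mul] using
      (integrable_mul_exp_neg_mul_sq (b := 1 / 2) one_half_pos).integrableOn (s := Ioi t)
  rw [integral_Ioi_of_hasDerivAt_of_tendsto (by fun_prop) (fun x _ => hderiv x) hint hlim]
  simp

lemma integral_Ioi_exp_neg_sq_div_two_le {t : ℝ} (ht : 0 < t) :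
    ∫ x in Ioi t, exp (-x ^ 2 / 2) ≤ t⁻¹ * exp (-t ^ 2 / 2) := by
  have hint : IntegrableOn (fun x => exp (-x ^ 2 / 2)) (Ioi t) := by
    simpa [neg_div, div_eq_inv_mul] using
      (integrable_exp_neg_mul_sq (b := 1 / 2) one_half_pos).integrableOn (s := Ioi t)
  have hint' : IntegrableOn (fun x => x * exp (-x ^ 2 / 2)) (Ioi t) := by
    simpa [neg_div, div_eq_inv_mul] using
      (integrable_mul_exp_neg_mul_sq (b := 1 / 2) one_half_pos).integrableOn (s := Ioi t)
  calc ∫ x in Ioi t, exp (-x ^ 2 / 2)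
      ≤ ∫ x in Ioi t, t⁻¹ * (x * exp (-x ^ 2 / 2)) := by
        refine setIntegral_mono_on hint (hint'.const_mul _) measurableSet_Ioi fun x hx => ?_
        rw [← mul_assoc]
        exact le_mul_of_one_le_left (exp_pos _).le
          ((one_le_inv_mul₀ ht).mpr (le_of_lt hx))
    _ = t⁻¹ * exp (-t ^ 2 / 2) := by
        rw [integral_const_mul, integral_Ioi_mul_exp_neg_sq_div_two]

lemma gaussianReal_Ioi_le {t : ℝ} (ht : 0 < t) :
    gaussianReal 0 1 (Ioi t) ≤ ENNReal.ofReal ((√(2 * π) * t)⁻¹ * exp (-t ^ 2 / 2)) := by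
  rw [gaussianReal_apply_eq_integral _ one_ne_zero]
  refine ENNReal.ofReal_le_ofReal ?_
  simp_rw [gaussianPDFReal_zero_one, integral_const_mul, mul_inv, mul_assoc]
  exact mul_le_mul_of_nonneg_left (integral_Ioi_exp_neg_sq_div_two_le ht) (by positivity)

lemma gaussianReal_lt_abs_le {t : ℝ} (ht : 0 < t) :
    gaussianReal 0 1 {x | t < |x|}
      ≤ ENNReal.ofReal (2 * ((√(2 * π) * t)⁻¹ * exp (-t ^ 2 / 2))) := by
  have hsplit : {x : ℝ | t < |x|} = Ioi t ∪ (fun x => -x) ⁻¹' Ioi t := by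
    ext x
    simp [lt_abs, lt_neg]
  have hneg : gaussianReal 0 1 ((fun x => -x) ⁻¹' Ioi t) = gaussianReal 0 1 (Ioi t) := by
    rw [← Measure.map_apply measurable_neg measurableSet_Ioi, gaussianReal_map_neg, neg_zero]
  calc gaussianReal 0 1 {x | t < |x|}
      ≤ gaussianReal 0 1 (Ioi t) + gaussianReal 0 1 (Ioi t) := by
        rw [hsplit]
        exact (measure_union_le _ _).trans_eq (by rw [hneg])
    _ ≤ _ := by
        rw [two_mul, ENNReal.ofReal_add (by positivity) (by positivity)]
        exact add_le_add (gaussianReal_Ioi_le ht) (gaussianReal_Ioi_le ht)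

lemma gaussianReal_mul_sqrt_lt_abs_le {γ c s : ℝ} (hγ : 0 < γ) (hc : 0 < c) (hcs : c < s) :
    gaussianReal 0 1 {x | γ * √s < |x|}
      ≤ ENNReal.ofReal (2 / (γ * √(2 * π * c)) * exp (-(γ ^ 2 / 2) * s)) := by
  have hs : 0 < s := hc.trans hcs
  refine (gaussianReal_lt_abs_le (by positivity)).trans (ENNReal.ofReal_le_ofReal ?_)
  have hexp : -(γ * √s) ^ 2 / 2 = -(γ ^ 2 / 2) * s := by
    rw [mul_pow, sq_sqrt hs.le]
    ring
  have hconst : γ * √(2 * π * c) ≤ √(2 * π) * (γ * √s) := by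
    rw [sqrt_mul (by positivity) c, mul_left_comm]
    gcongr
  rw [hexp, ← mul_assoc, div_eq_mul_inv 2]
  gcongr

lemma integral_exp_mul_sq_gaussianReal {t : ℝ} (ht : t < 1 / 2) :
    ∫ x, exp (t * x ^ 2) ∂gaussianReal 0 1 = (1 - 2 * t) ^ (-(1 / 2 : ℝ)) := by
  have hb : 0 < 1 - 2 * t := by linarith
  have hdensity (x : ℝ) : gaussianPDFReal 0 1 x • exp (t * x ^ 2)
      = (√(2 * π))⁻¹ * exp (-((1 - 2 * t) / 2) * x ^ 2) := by
    rw [gaussianPDFReal_zero_one, smul_eq_mul, mul_assoc, ← exp_add]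
    ring_nf
  simp_rw [integral_gaussianReal_eq_integral_smul one_ne_zero, hdensity, integral_const_mul,
    integral_gaussian]
  rw [← sqrt_inv, ← sqrt_mul (by positivity)]
  have hratio : (2 * π)⁻¹ * (π / ((1 - 2 * t) / 2)) = (1 - 2 * t)⁻¹ := by
    field_simp
  rw [hratio, sqrt_eq_rpow, ← rpow_neg_one, ← rpow_mul hb.le]
  norm_num

namespace ProbabilityTheory

section Independence

variable {Ω ι : Type*} [MeasurableSpace Ω] {μ : Measure Ω} {X : ι → Ω → ℝ}

lemma iIndepFun.indepFun_sum_sq_of_notMem (hindep : iIndepFun X μ)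
    (hmeas : ∀ i, Measurable (X i)) {i : ι} {s : Finset ι} (hi : i ∉ s) :
    IndepFun (X i) (fun ω => ∑ j ∈ s, X j ω ^ 2) μ := by
  have hφ : Measurable fun v : ({i} : Finset ι) → ℝ => v ⟨i, Finset.mem_singleton_self i⟩ :=
    measurable_pi_apply _
  have hψ : Measurable fun v : s → ℝ => ∑ j, v j ^ 2 := by fun_prop
  have h := (hindep.indepFun_finset {i} s (Finset.disjoint_singleton_left.mpr hi) hmeas).comp hφ hψ
  convert h using 1
  · rfl
  · ext ω
    exact (Finset.sum_coe_sort s fun j => X j ω ^ 2).symm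

lemma iIndepFun.mgf_sum_sq (hindep : iIndepFun X μ) (hmeas : ∀ i, Measurable (X i))
    (hlaw : ∀ i, μ.map (X i) = gaussianReal 0 1) (s : Finset ι) {t : ℝ} (ht : t < 1 / 2) :
    mgf (fun ω => ∑ i ∈ s, X i ω ^ 2) μ t = (1 - 2 * t) ^ (-(s.card : ℝ) / 2) := by
  have hsq : iIndepFun (fun i ω => X i ω ^ 2) μ :=
    hindep.comp (fun _ x => x ^ 2) fun _ => by fun_prop
  have hmgf_sq (i : ι) : mgf (fun ω => X i ω ^ 2) μ t = (1 - 2 * t) ^ (-(1 / 2 : ℝ)) := by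
    rw [mgf, ← integral_exp_mul_sq_gaussianReal ht, ← hlaw i,
      integral_map (hmeas i).aemeasurable (by fun_prop)]
  have hsum : (fun ω => ∑ i ∈ s, X i ω ^ 2) = ∑ i ∈ s, fun ω => X i ω ^ 2 := by
    ext ω
    simp [Finset.sum_apply]
  rw [hsum, hsq.mgf_sum (fun i => (hmeas i).pow_const 2),
    Finset.prod_congr rfl fun i _ => hmgf_sq i, Finset.prod_const, ← rpow_natCast, ← rpow_mul (by linarith)]
  ring_nf

end Independence

section Conditioning

variable {Ω : Type*} [MeasurableSpace Ω] {μ : Measure Ω}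

lemma IndepFun.measure_preimage_prodMk_eq_lintegral {α β : Type*} [MeasurableSpace α]
    [MeasurableSpace β] [IsFiniteMeasure μ] {X : Ω → α} {Y : Ω → β} (h : IndepFun X Y μ)
    (hX : Measurable X) (hY : Measurable Y) {T : Set (α × β)} (hT : MeasurableSet T) :
    μ ((fun ω => (X ω, Y ω)) ⁻¹' T) = ∫⁻ ω, μ.map X ((fun x => (x, Y ω)) ⁻¹' T) ∂μ := by
  rw [← Measure.map_apply (hX.prodMk hY) hT,
    (indepFun_iff_map_prod_eq_prod_map_map hX.aemeasurable hY.aemeasurable).mp h,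
    Measure.prod_apply_symm hT, lintegral_map (measurable_measure_prodMk_right hT) hY]

lemma measure_mul_sqrt_lt_abs_and_lt_le [IsProbabilityMeasure μ] {X S : Ω → ℝ} (hX : Measurable X)
    (hS : Measurable S) (hXS : IndepFun X S μ) (hlaw : μ.map X = gaussianReal 0 1)
    (hS_nonneg : ∀ ω, 0 ≤ S ω) {γ c : ℝ} (hγ : 0 < γ) (hc : 0 < c) :
    μ {ω | γ * √(S ω) < |X ω| ∧ c < S ω}
      ≤ ENNReal.ofReal (2 / (γ * √(2 * π * c)) * mgf S μ (-(γ ^ 2 / 2))) := by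
  set K := 2 / (γ * √(2 * π * c))
  set T : Set (ℝ × ℝ) := {p | γ * √p.2 < |p.1| ∧ c < p.2}
  have hT : MeasurableSet T := by
    refine (measurableSet_lt (f := fun p : ℝ × ℝ => γ * √p.2) ?_ ?_).inter
      (measurableSet_lt (f := fun _ : ℝ × ℝ => c) ?_ ?_) <;> fun_prop
  have hslice (s : ℝ) :
      gaussianReal 0 1 ((fun x => (x, s)) ⁻¹' T) ≤ ENNReal.ofReal (K * exp (-(γ ^ 2 / 2) * s)) := by
    by_cases hcs : c < s
    · simpa [T, hcs] using gaussianReal_mul_sqrt_lt_abs_le hγ hc hcs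
    · simp [T, hcs]
  have hint : Integrable (fun ω => K * exp (-(γ ^ 2 / 2) * S ω)) μ := by
    refine (integrable_const K).mono' (by fun_prop) (ae_of_all _ fun ω => ?_)
    rw [norm_of_nonneg (by positivity)]
    refine mul_le_of_le_one_right (by positivity) (exp_le_one_iff.mpr ?_)
    nlinarith [hS_nonneg ω, sq_nonneg γ]
  calc μ {ω | γ * √(S ω) < |X ω| ∧ c < S ω} = μ ((fun ω => (X ω, S ω)) ⁻¹' T) := rfl
    _ = ∫⁻ ω, gaussianReal 0 1 ((fun x => (x, S ω)) ⁻¹' T) ∂μ := by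
        rw [hXS.measure_preimage_prodMk_eq_lintegral hX hS hT, hlaw]
    _ ≤ ∫⁻ ω, ENNReal.ofReal (K * exp (-(γ ^ 2 / 2) * S ω)) ∂μ :=
        lintegral_mono fun ω => hslice (S ω)
    _ = ENNReal.ofReal (K * mgf S μ (-(γ ^ 2 / 2))) := by
        rw [← ofReal_integral_eq_lintegral_ofReal hint (ae_of_all _ fun ω => by positivity),
          integral_const_mul]
        rfl

end Conditioning

end ProbabilityTheory

lemma mul_sqrt_lt_abs_of_lt_abs_div_sqrt {x s γ : ℝ} (hγ : 0 ≤ γ)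
    (h : γ < |x| / √(x ^ 2 + s)) : γ * √s < |x| := by
  have hpos : 0 < √(x ^ 2 + s) := by
    by_contra! h0
    rw [le_antisymm h0 (sqrt_nonneg _), div_zero] at h
    linarith
  calc γ * √s ≤ γ * √(x ^ 2 + s) := by gcongr; exact le_add_of_nonneg_left (sq_nonneg x)
    _ < |x| := (lt_div_iff₀ hpos).mp h

/-- For a standard Gaussian vector `ξ ~ N(0, I_m)` with `m ≥ 2`, the probability that
`|ξ₁|/‖ξ‖ > γ*` is bounded by the probability that `‖ξ₋₁‖² ≤ (m-1)/2` plus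
`(2/(γ*·√((m−1)π)))·(1 + γ*²)^{−(m−1)/2}`. -/
theorem stmt2 {Ω : Type*} [MeasureSpace Ω] [IsProbabilityMeasure (ℙ : Measure Ω)]
    (m : ℕ) [NeZero m] (hm : 2 ≤ m) (ξ : Ω → Fin m → ℝ)
    (hmeas : ∀ i, Measurable fun ω => ξ ω i)
    (hindep : iIndepFun (fun i ω => ξ ω i) ℙ)
    (hlaw : ∀ i, Measure.map (fun ω => ξ ω i) ℙ = gaussianReal 0 1)
    (γ : ℝ) (hγ : 0 < γ) :
    (ℙ {ω | |ξ ω 0| / Real.sqrt (∑ i, ξ ω i ^ 2) > γ}).toReal ≤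
      (ℙ {ω | ∑ i ∈ Finset.univ.erase (0 : Fin m), ξ ω i ^ 2 ≤ ((m : ℝ) - 1) / 2}).toReal
        + (2 / (γ * Real.sqrt (((m : ℝ) - 1) * Real.pi))) *
          (1 + γ ^ 2) ^ (-(((m : ℝ) - 1) / 2)) := by
  set c : ℝ := ((m : ℝ) - 1) / 2
  set S : Ω → ℝ := fun ω => ∑ i ∈ Finset.univ.erase (0 : Fin m), ξ ω i ^ 2
  have hc : 0 < c := by
    have : (2 : ℝ) ≤ m := by exact_mod_cast hm
    exact div_pos (by linarith) two_pos
  have hS_nonneg (ω : Ω) : 0 ≤ S ω := Finset.sum_nonneg fun i _ => sq_nonneg _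
  have hsub : {ω | |ξ ω 0| / √(∑ i, ξ ω i ^ 2) > γ}
      ⊆ {ω | S ω ≤ c} ∪ {ω | γ * √(S ω) < |ξ ω 0| ∧ c < S ω} := by
    intro ω hω
    rw [Set.mem_ofPred_eq, ← Finset.add_sum_erase _ _ (Finset.mem_univ 0)] at hω
    by_cases hSc : S ω ≤ c
    · exact Or.inl hSc
    · exact Or.inr ⟨mul_sqrt_lt_abs_of_lt_abs_div_sqrt hγ.le hω, not_le.mp hSc⟩
  have hmgf : mgf S ℙ (-(γ ^ 2 / 2)) = (1 + γ ^ 2) ^ (-(((m : ℝ) - 1) / 2)) := by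
    rw [hindep.mgf_sum_sq hmeas hlaw _ (by nlinarith), Finset.card_erase_of_mem (Finset.mem_univ _),
      Finset.card_univ, Fintype.card_fin, Nat.cast_pred (NeZero.pos m)]
    ring_nf
  have htail := measure_mul_sqrt_lt_abs_and_lt_le (hmeas 0) (by fun_prop)
    (hindep.indepFun_sum_sq_of_notMem hmeas (Finset.notMem_erase 0 Finset.univ)) (hlaw 0)
    hS_nonneg hγ hc
  rw [hmgf, show 2 * π * c = ((m : ℝ) - 1) * π by ring] at htail
  calc (ℙ {ω | |ξ ω 0| / √(∑ i, ξ ω i ^ 2) > γ}).toReal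
      ≤ (ℙ {ω | S ω ≤ c} + ℙ {ω | γ * √(S ω) < |ξ ω 0| ∧ c < S ω}).toReal :=
        ENNReal.toReal_mono (by finiteness) ((measure_mono hsub).trans (measure_union_le _ _))
    _ ≤ _ := by
        rw [ENNReal.toReal_add (by finiteness) (by finiteness)]
        gcongr
        exact ENNReal.toReal_le_of_le_ofReal (by positivity) htail
end

section
/- Let X, X̃ ∈ ℝ^{n×p}, and for each j let P₋ⱼ be the orthogonal projection onto the span of the columns of X other than xⱼ. Let G̃^{(j)} be the Gram matrix of (x₁,…,x_{j−1}, xⱼ, x̃ⱼ, x_{j+1},…,x_p), and let Dⱼ be the 2×2 submatrix of (G̃^{(j)})⁻¹ corresponding to the rows/columns of xⱼ and x̃ⱼ, with σ_{1j} = Dⱼ(1,1) and σ_{2j} = Dⱼ(1,2). If xⱼᵀ(I − P₋ⱼ)x̃ⱼ = 0, then σ_{1j} equals the j-th diagonal entry of (XᵀX)⁻¹ and σ_{2j} = 0. -/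
/-!
Write the residual `r = xⱼ - P₋ⱼ xⱼ` as `r = ∑ₖ bₖ xₖ` with `bⱼ = 1`. Since `r ⊥ xₖ` for `k ≠ j`,
the Gram matrix `XᵀX` maps `b` to `⟪xⱼ, r⟫ eⱼ`; as `r ⊥ x̃ⱼ` as well, the augmented Gram matrix
maps `(b, 0)` to `⟪xⱼ, r⟫ eⱼ` too. So `b / ⟪xⱼ, r⟫` is the `j`-th column of both inverses, which
gives equal diagonal entries and a vanishing entry at `x̃ⱼ`.
-/

open Matrix

open scoped InnerProductSpace

lemma Matrix.inv_apply_mul_eq_of_mulVec_eq_single {m R : Type*} [Fintype m] [DecidableEq m]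
    [CommRing R] {M : Matrix m m R} (hM : IsUnit M.det) {b : m → R} {j : m} {ω : R}
    (h : M *ᵥ b = Pi.single j ω) (k : m) : M⁻¹ k j * ω = b k := by
  have hb : M⁻¹ *ᵥ Pi.single j ω = b := by
    rw [← h, mulVec_mulVec, nonsing_inv_mul M hM, one_mulVec]
  rw [← hb, mulVec_single]
  rfl

lemma Matrix.transpose_mul_self_eq_gram {m n : Type*} [Fintype m] (A : Matrix m n ℝ) :
    Aᵀ * A = gram ℝ fun k => WithLp.toLp 2 fun i => A i k := by
  ext k l
  simp [mul_apply, PiLp.inner_apply, mul_comm]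

lemma Submodule.exists_sum_smul_eq_sub_of_mem_span_image_ne {ι R M : Type*} [Fintype ι]
    [DecidableEq ι] [Ring R] [AddCommGroup M] [Module R M] (v : ι → M) (j : ι) {y : M}
    (hy : y ∈ span R (v '' {k | k ≠ j})) :
    ∃ b : ι → R, b j = 1 ∧ ∑ k, b k • v k = v j - y := by
  obtain ⟨l, hl, rfl⟩ := Finsupp.mem_span_image_iff_linearCombination R |>.1 hy
  have hlj : l j = 0 := Finsupp.notMem_support_iff.1 fun h => hl h rfl
  refine ⟨Pi.single j 1 - ⇑l, by simp [hlj], ?_⟩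
  simp [sub_smul, Finset.sum_sub_distrib, Finsupp.linearCombination_apply, Finsupp.sum_fintype]

section Gram

variable {ι 𝕜 E : Type*} [Fintype ι] [RCLike 𝕜] [NormedAddCommGroup E]
  [InnerProductSpace 𝕜 E]

lemma Matrix.gram_mulVec_apply (v : ι → E) (b : ι → 𝕜) (i : ι) :
    (gram 𝕜 v *ᵥ b) i = ⟪v i, ∑ k, b k • v k⟫_𝕜 := by
  simp [mulVec, dotProduct, inner_sum, inner_smul_right, mul_comm]

lemma Matrix.inv_gram_apply_mul_inner_eq [DecidableEq ι] {v : ι → E}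
    (hv : IsUnit (gram 𝕜 v).det) {j : ι} {b : ι → 𝕜}
    (horth : ∀ k ≠ j, ⟪v k, ∑ i, b i • v i⟫_𝕜 = 0) (k : ι) :
    (gram 𝕜 v)⁻¹ k j * ⟪v j, ∑ i, b i • v i⟫_𝕜 = b k := by
  refine inv_apply_mul_eq_of_mulVec_eq_single hv (funext fun i => ?_) k
  rw [gram_mulVec_apply]
  by_cases hi : i = j
  · subst hi; simp
  · simp [hi, horth i hi]

theorem Matrix.inv_gram_sumElim_of_inner_residual_eq_zero [DecidableEq ι] [FiniteDimensional 𝕜 E]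
    {v : ι → E} {u : E} {j : ι} (hv : IsUnit (gram 𝕜 v).det)
    (hvu : IsUnit (gram 𝕜 (Sum.elim v fun _ : Unit => u)).det)
    (hperp : ⟪v j - (Submodule.span 𝕜 (v '' {k | k ≠ j})).starProjection (v j), u⟫_𝕜 = 0) :
    (gram 𝕜 (Sum.elim v fun _ : Unit => u))⁻¹ (.inl j) (.inl j) = (gram 𝕜 v)⁻¹ j j ∧
      (gram 𝕜 (Sum.elim v fun _ : Unit => u))⁻¹ (.inl j) (.inr ()) = 0 := by
  set K := Submodule.span 𝕜 (v '' {k | k ≠ j})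
  set r := v j - K.starProjection (v j)
  obtain ⟨b, hbj, hb⟩ := Submodule.exists_sum_smul_eq_sub_of_mem_span_image_ne v j
    (K.starProjection_apply_mem (v j))
  have hvr : ∀ k ≠ j, ⟪v k, r⟫_𝕜 = 0 := fun k hk =>
    Submodule.inner_right_of_mem_orthogonal (Submodule.subset_span (Set.mem_image_of_mem v hk))
      (K.sub_starProjection_mem_orthogonal (v j))
  set w : ι ⊕ Unit → E := Sum.elim v fun _ => u
  have hw : ∑ s, Sum.elim b 0 s • w s = r := by
    simp only [w, Fintype.sum_sum_type, Sum.elim_inl, Sum.elim_inr, Pi.zero_apply, zero_smul,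
      Finset.sum_const_zero, add_zero]
    exact hb
  have hcol_v := inv_gram_apply_mul_inner_eq hv (b := b) (by rw [hb]; exact hvr)
  have hcol_w := inv_gram_apply_mul_inner_eq hvu (j := .inl j) (b := Sum.elim b 0) (by
    rw [hw]
    rintro (k | _) hk
    · exact hvr k (by simpa using hk)
    · exact inner_eq_zero_symm.1 hperp)
  rw [hb] at hcol_v
  rw [hw] at hcol_w
  have hω : ⟪v j, r⟫_𝕜 ≠ 0 := right_ne_zero_of_mul_eq_one ((hcol_v j).trans hbj)
  refine ⟨mul_right_cancel₀ hω ((hcol_w _).trans (hcol_v j).symm), ?_⟩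
  rw [← (isHermitian_gram 𝕜 w).inv.apply, (mul_eq_zero.1 (hcol_w (.inr ()))).resolve_right hω,
    star_zero]

end Gram

/-- If the residual of `xⱼ` (after projecting out the other columns of `X`) is orthogonal
to `x̃ⱼ`, then in the inverse Gram matrix of `(x₁,…,xⱼ,x̃ⱼ,…,x_p)` the diagonal entry at
`xⱼ` equals `((XᵀX)⁻¹)ⱼⱼ` and the off-diagonal entry between `xⱼ` and `x̃ⱼ` is zero. -/
theorem stmt5 {n p : ℕ} (X Xt : Matrix (Fin n) (Fin p) ℝ) (j : Fin p)
    (hG : (Xᵀ * X).PosDef) :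
    letI x : Fin p → EuclideanSpace ℝ (Fin n) :=
      fun k => (WithLp.equiv 2 (Fin n → ℝ)).symm (fun i => X i k)
    letI xt : EuclideanSpace ℝ (Fin n) :=
      (WithLp.equiv 2 (Fin n → ℝ)).symm (fun i => Xt i j)
    letI K : Submodule ℝ (EuclideanSpace ℝ (Fin n)) :=
      Submodule.span ℝ {v | ∃ k, k ≠ j ∧ v = x k}
    letI Y : Matrix (Fin n) (Fin p ⊕ Unit) ℝ :=
      Matrix.of fun i => Sum.elim (fun k => X i k) (fun _ => Xt i j)
    (Yᵀ * Y).PosDef →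
    inner (𝕜 := ℝ) (x j - (K.orthogonalProjection (x j) : EuclideanSpace ℝ (Fin n))) xt = 0 →
    (Yᵀ * Y)⁻¹ (Sum.inl j) (Sum.inl j) = (Xᵀ * X)⁻¹ j j ∧
      (Yᵀ * Y)⁻¹ (Sum.inl j) (Sum.inr ()) = 0 := by
  intro hY hperp
  set x : Fin p → EuclideanSpace ℝ (Fin n) :=
    fun k => (WithLp.equiv 2 (Fin n → ℝ)).symm fun i => X i k
  set xt : EuclideanSpace ℝ (Fin n) := (WithLp.equiv 2 (Fin n → ℝ)).symm fun i => Xt i j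
  set Y : Matrix (Fin n) (Fin p ⊕ Unit) ℝ := of fun i => Sum.elim (fun k => X i k) fun _ => Xt i j
  have hK : {v | ∃ k, k ≠ j ∧ v = x k} = x '' {k | k ≠ j} :=
    Set.ext fun v => exists_congr fun k => and_congr_right fun _ => eq_comm
  have hGX : Xᵀ * X = gram ℝ x := transpose_mul_self_eq_gram X
  have hGY : Yᵀ * Y = gram ℝ (Sum.elim x fun _ => xt) := by
    rw [transpose_mul_self_eq_gram]; congr 1; funext s; cases s <;> rfl
  rw [hGX] at hG ⊢
  rw [hGY] at hY ⊢
  rw [hK] at hperp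
  exact inv_gram_sumElim_of_inner_residual_eq_zero (isUnit_iff_ne_zero.2 hG.det_pos.ne')
    (isUnit_iff_ne_zero.2 hY.det_pos.ne') hperp
end

section
/- Let X ∈ ℝ^{n×p} have full column rank and define zⱼ = (I − P₋ⱼ)xⱼ. For X̃ ∈ ℝ^{n×p}, the condition x̃ⱼᵀ(I − P₋ⱼ)xⱼ = 0 for every j = 1,…,p holds if the knockoff-type conditions x̃ⱼᵀxⱼ = ‖P₋ⱼxⱼ‖² and x̃ⱼᵀx_k = xⱼᵀx_k (k ≠ j) hold; equivalently, with G = XᵀX, the choice diag(s) = [diag(G⁻¹)]⁻¹ in the knockoff construction XᵀX̃ = G − diag(s) yields x̃ⱼᵀ(I − P₋ⱼ)xⱼ = 0 for all j. -/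
/-!
Let `q = xⱼ - P₋ⱼ xⱼ` be the residual of `xⱼ`, and let `w = ∑ₖ (G⁻¹)ₖⱼ xₖ`, so that
`⟪xₐ, w⟫ = δₐⱼ`. Pairing `w` with `q` in two ways gives `(G⁻¹)ⱼⱼ ⟪xⱼ, q⟫ = ⟪w, q⟫ = ⟪w, xⱼ⟫ = 1`,
because `q` is orthogonal to every `xₖ` with `k ≠ j` and `w` is orthogonal to their span.
The knockoff constraint makes `x̃ⱼ - xⱼ` orthogonal to that span with `⟪x̃ⱼ - xⱼ, xⱼ⟫ = -sⱼ`,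
hence `⟪x̃ⱼ, q⟫ = ((G⁻¹)ⱼⱼ)⁻¹ - sⱼ`.
-/

open Matrix Submodule

theorem EuclideanSpace.inner_cols {m ι : Type*} [Fintype m] (X Y : Matrix m ι ℝ) (a b : ι) :
    inner ℝ ((WithLp.equiv 2 (m → ℝ)).symm (fun i => X i a))
      ((WithLp.equiv 2 (m → ℝ)).symm (fun i => Y i b)) = (Xᵀ * Y) a b := by
  simp [EuclideanSpace.inner_eq_star_dotProduct, Matrix.mul_apply, dotProduct, mul_comm]

variable {E : Type*} [NormedAddCommGroup E] [InnerProductSpace ℝ E]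

theorem Submodule.mem_orthogonal_span_iff {S : Set E} {u : E} :
    u ∈ (span ℝ S)ᗮ ↔ ∀ v ∈ S, inner ℝ v u = 0 := by
  refine ⟨fun h v hv => h v (subset_span hv), fun h v hv => ?_⟩
  have hle : span ℝ S ≤ (ℝ ∙ u)ᗮ :=
    span_le.2 fun v hv => mem_orthogonal_singleton_iff_inner_left.2 (h v hv)
  exact mem_orthogonal_singleton_iff_inner_left.1 (hle hv)

theorem Submodule.inner_sub_starProjection_of_mem_orthogonal (K : Submodule ℝ E)
    [K.HasOrthogonalProjection] {u : E} (hu : u ∈ Kᗮ) (v : E) :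
    inner ℝ u (v - K.starProjection v) = inner ℝ u v := by
  rw [inner_sub_right, inner_left_of_mem_orthogonal (K.starProjection_apply_mem v) hu, sub_zero]

section Residual

variable {ι : Type*} (x : ι → E)

def spanOthers (j : ι) : Submodule ℝ E := span ℝ {v | ∃ k, k ≠ j ∧ v = x k}

variable {x}

theorem mem_orthogonal_spanOthers_iff {j : ι} {u : E} :
    u ∈ (spanOthers x j)ᗮ ↔ ∀ k, k ≠ j → inner ℝ (x k) u = 0 := by
  rw [spanOthers, mem_orthogonal_span_iff]
  exact ⟨fun h k hk => h _ ⟨k, hk, rfl⟩, by rintro h _ ⟨k, hk, rfl⟩; exact h k hk⟩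

variable [Fintype ι] [DecidableEq ι]

theorem inner_sum_inv_gram_smul (hG : IsUnit (gram ℝ x).det) (a j : ι) :
    inner ℝ (x a) (∑ k, (gram ℝ x)⁻¹ k j • x k) = (1 : Matrix ι ι ℝ) a j := by
  simp only [inner_sum, inner_smul_right, ← mul_nonsing_inv _ hG, mul_apply, gram_apply]
  exact Finset.sum_congr rfl fun _ _ => mul_comm _ _

theorem inv_gram_mul_inner_residual (hG : IsUnit (gram ℝ x).det) (j : ι)
    [(spanOthers x j).HasOrthogonalProjection] :
    (gram ℝ x)⁻¹ j j * inner ℝ (x j) (x j - (spanOthers x j).starProjection (x j)) = 1 := by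
  set K := spanOthers x j
  set w := ∑ k, (gram ℝ x)⁻¹ k j • x k
  have hq : x j - K.starProjection (x j) ∈ Kᗮ := K.sub_starProjection_mem_orthogonal (x j)
  have hw : w ∈ Kᗮ := mem_orthogonal_spanOthers_iff.2 fun k hk => by
    rw [inner_sum_inv_gram_smul hG, one_apply_ne hk]
  calc (gram ℝ x)⁻¹ j j * inner ℝ (x j) (x j - K.starProjection (x j))
      = inner ℝ w (x j - K.starProjection (x j)) := by
        rw [sum_inner, Finset.sum_eq_single j]
        · rw [real_inner_smul_left]
        · intro k _ hk
          rw [real_inner_smul_left, mem_orthogonal_spanOthers_iff.1 hq k hk, mul_zero]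
        · simp
    _ = inner ℝ w (x j) := K.inner_sub_starProjection_of_mem_orthogonal hw (x j)
    _ = 1 := by rw [real_inner_comm, inner_sum_inv_gram_smul hG, one_apply_eq]

theorem inner_residual_of_inner_eq (hG : IsUnit (gram ℝ x).det) (j : ι)
    [(spanOthers x j).HasOrthogonalProjection] {y : E}
    (hy : ∀ k, k ≠ j → inner ℝ (x k) y = inner ℝ (x k) (x j)) :
    inner ℝ y (x j - (spanOthers x j).starProjection (x j)) =
      inner ℝ (y - x j) (x j) + ((gram ℝ x)⁻¹ j j)⁻¹ := by
  have hyx : y - x j ∈ (spanOthers x j)ᗮ := mem_orthogonal_spanOthers_iff.2 fun k hk => by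
    rw [inner_sub_right, hy k hk, sub_self]
  rw [← (spanOthers x j).inner_sub_starProjection_of_mem_orthogonal hyx,
    ← eq_inv_of_mul_eq_one_right (inv_gram_mul_inner_residual hG j), ← inner_add_left,
    sub_add_cancel]

end Residual

/-- Under the knockoff constraint `XᵀX̃ = G − diag(s)` with `G = XᵀX` positive definite,
the orthogonality conditions `x̃ⱼᵀ(I − P₋ⱼ)xⱼ = 0` for all `j` hold if and only if
`diag(s) = [diag(G⁻¹)]⁻¹`, i.e. `sⱼ = ((G⁻¹)ⱼⱼ)⁻¹` for all `j`
(the conditional-independence knockoff). -/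
theorem stmt7 {n p : ℕ} (X Xt : Matrix (Fin n) (Fin p) ℝ) (s : Fin p → ℝ)
    (hpd : (Xᵀ * X).PosDef)
    (hknock : Xᵀ * Xt = Xᵀ * X - Matrix.diagonal s) :
    letI x : Fin p → EuclideanSpace ℝ (Fin n) :=
      fun k => (WithLp.equiv 2 (Fin n → ℝ)).symm (fun i => X i k)
    letI xt : Fin p → EuclideanSpace ℝ (Fin n) :=
      fun k => (WithLp.equiv 2 (Fin n → ℝ)).symm (fun i => Xt i k)
    letI K : Fin p → Submodule ℝ (EuclideanSpace ℝ (Fin n)) :=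
      fun j => Submodule.span ℝ {v | ∃ k, k ≠ j ∧ v = x k}
    (∀ j : Fin p,
        inner (𝕜 := ℝ) (xt j)
          (x j - (Submodule.orthogonalProjectionOnto (K j) (x j) : EuclideanSpace ℝ (Fin n))) = 0)
      ↔ (∀ j : Fin p, s j = ((Xᵀ * X)⁻¹ j j)⁻¹) := by
  set x : Fin p → EuclideanSpace ℝ (Fin n) :=
    fun k => (WithLp.equiv 2 (Fin n → ℝ)).symm (fun i => X i k)
  set xt : Fin p → EuclideanSpace ℝ (Fin n) :=
    fun k => (WithLp.equiv 2 (Fin n → ℝ)).symm (fun i => Xt i k)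
  have hgram : gram ℝ x = Xᵀ * X := Matrix.ext fun a b => EuclideanSpace.inner_cols X X a b
  have hcross : ∀ a b, inner ℝ (x a) (xt b) = (Xᵀ * X) a b - diagonal s a b := fun a b => by
    rw [EuclideanSpace.inner_cols, hknock, Matrix.sub_apply]
  have hG : IsUnit (gram ℝ x).det := hgram ▸ hpd.isUnit.map detMonoidHom
  refine forall_congr' fun j => ?_
  have hxt : ∀ k, k ≠ j → inner ℝ (x k) (xt j) = inner ℝ (x k) (x j) := fun k hk => by
    rw [hcross, diagonal_apply_ne _ hk, sub_zero, EuclideanSpace.inner_cols]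
  have hdiag : inner ℝ (xt j - x j) (x j) = -s j := by
    rw [real_inner_comm, inner_sub_right, hcross, diagonal_apply_eq, EuclideanSpace.inner_cols]
    ring
  change inner ℝ (xt j) (x j - (spanOthers x j).starProjection (x j)) = 0 ↔ _
  rw [inner_residual_of_inner_eq hG j hxt, hdiag, hgram, neg_add_eq_zero]
end

section
/- Let Σ = [[1, a],[a, 1]] with |a| < 1 and let R_sgm = {h ∈ ℝ² : |h₁| > |h₂|, |h₁| > √u} for u > 0. Then inf_{h ∈ R_sgm} hᵀΣ⁻¹h = u, attained at (√u, a√u). -/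
/-!
Completing the square, `hᵀΣ⁻¹h = h₁² + (h₂ - a h₁)² / (1 - a²) ≥ h₁²`, which exceeds `u` on `R`.
Equality holds on the line `h₂ = a h₁`, and the points `(t, a t)` with `t > √u` lie in `R`, so the
values of the form on `R` are exactly `(u, ∞)`.
-/

open Matrix

theorem inv_of_one_a_a_one (a : ℝ) :
    (!![1, a; a, 1] : Matrix (Fin 2) (Fin 2) ℝ)⁻¹ = (1 - a ^ 2)⁻¹ • !![1, -a; -a, 1] := by
  simp [Matrix.inv_def, Matrix.adjugate_fin_two_of, Matrix.det_fin_two_of, sq]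

theorem dotProduct_inv_mulVec (a : ℝ) (h : Fin 2 → ℝ) :
    h ⬝ᵥ (!![1, a; a, 1] : Matrix (Fin 2) (Fin 2) ℝ)⁻¹ *ᵥ h
      = (h 0 ^ 2 - 2 * a * h 0 * h 1 + h 1 ^ 2) / (1 - a ^ 2) := by
  rw [inv_of_one_a_a_one, smul_mulVec, dotProduct_smul]
  simp only [dotProduct, mulVec, of_apply, cons_val', cons_val_fin_one, Fin.sum_univ_two,
    cons_val_zero, cons_val_one, smul_eq_mul]
  ring

theorem sq_le_dotProduct_inv_mulVec {a : ℝ} (ha : |a| < 1) (h : Fin 2 → ℝ) :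
    h 0 ^ 2 ≤ h ⬝ᵥ (!![1, a; a, 1] : Matrix (Fin 2) (Fin 2) ℝ)⁻¹ *ᵥ h := by
  have hdet : 0 < 1 - a ^ 2 := sub_pos.mpr ((sq_lt_one_iff_abs_lt_one a).mpr ha)
  rw [dotProduct_inv_mulVec, le_div_iff₀ hdet]
  nlinarith [sq_nonneg (h 1 - a * h 0)]

theorem dotProduct_inv_mulVec_line {a : ℝ} (ha : a ^ 2 ≠ 1) (t : ℝ) :
    ![t, a * t] ⬝ᵥ (!![1, a; a, 1] : Matrix (Fin 2) (Fin 2) ℝ)⁻¹ *ᵥ ![t, a * t] = t ^ 2 := by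
  rw [dotProduct_inv_mulVec, div_eq_iff (sub_ne_zero.mpr (Ne.symm ha))]
  simp only [cons_val_zero, cons_val_one]
  ring

theorem image_dotProduct_inv_mulVec_eq_Ioi {a u : ℝ} (ha : |a| < 1) (hu : 0 ≤ u) :
    (fun h => h ⬝ᵥ (!![1, a; a, 1] : Matrix (Fin 2) (Fin 2) ℝ)⁻¹ *ᵥ h) ''
      {h | |h 0| > |h 1| ∧ |h 0| > Real.sqrt u} = Set.Ioi u := by
  ext x
  constructor
  · rintro ⟨h, ⟨-, h0u⟩, rfl⟩
    calc u = Real.sqrt u ^ 2 := (Real.sq_sqrt hu).symm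
      _ < |h 0| ^ 2 := by gcongr
      _ = h 0 ^ 2 := sq_abs _
      _ ≤ _ := sq_le_dotProduct_inv_mulVec ha h
  · intro (hx : u < x)
    have ht : 0 < Real.sqrt x := Real.sqrt_pos.mpr (hu.trans_lt hx)
    refine ⟨![Real.sqrt x, a * Real.sqrt x], ⟨?_, ?_⟩, ?_⟩
    · simpa [abs_mul, abs_of_pos ht] using mul_lt_mul_of_pos_right ha ht
    · simpa [abs_of_pos ht] using Real.sqrt_lt_sqrt hu hx
    · exact (dotProduct_inv_mulVec_line (sq_lt_one_iff_abs_lt_one a |>.mpr ha).ne _).trans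
        (Real.sq_sqrt (hu.trans hx.le))

/-- Mahalanobis distance from the origin to the signed-maximum rejection region
`R = {h : |h₁| > |h₂|, |h₁| > √u}` equals `u`, attained at the boundary point
`(√u, a√u)`. -/
theorem stmt11 (a u : ℝ) (ha : |a| < 1) (hu : 0 < u) :
    letI S : Matrix (Fin 2) (Fin 2) ℝ := !![1, a; a, 1]
    letI Q : (Fin 2 → ℝ) → ℝ := fun h => h ⬝ᵥ (S⁻¹).mulVec h
    letI R : Set (Fin 2 → ℝ) := {h | |h 0| > |h 1| ∧ |h 0| > Real.sqrt u}
    sInf (Q '' R) = u ∧ Q ![Real.sqrt u, a * Real.sqrt u] = u := by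
  refine ⟨?_, ?_⟩
  · rw [image_dotProduct_inv_mulVec_eq_Ioi ha hu.le, csInf_Ioi]
  · exact (dotProduct_inv_mulVec_line (sq_lt_one_iff_abs_lt_one a |>.mpr ha).ne _).trans
      (Real.sq_sqrt hu.le)
end

section
/- Let (Z, Z̃) ~ N₂((β, 0)ᵀ, Σ) with Σ = [[σ₁, σ₂],[σ₂, σ₁]] positive definite and β = √(2r log p), and consider the region S = {(x,y) : |x| ≤ √(2u log p) or |x| < |y|} ⊂ ℝ². Then the infimum of the Mahalanobis squared distance (v − (β,0))ᵀΣ⁻¹(v − (β,0)) over v ∈ S equals 2 log(p) · min{ (√r − √u)₊²/σ₁, r/(2(σ₁+σ₂)), r/(2(σ₁−σ₂)) } when r > u. -/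
/-!
Writing `v - (β, 0) = (x, y)`, the eigenvectors `(1, ±1)` of `Σ` diagonalise the Mahalanobis form
as `(x + y)²/(2(σ₁+σ₂)) + (x - y)²/(2(σ₁-σ₂))`. Minimising over `y` at fixed `x` gives `x²/σ₁`, so
the strip `|v₀| ≤ t` contributes `(β - t)²/σ₁`, attained at `v₀ = t`. On the cone `|v₀| < |v₁|`
one of `x ± y` has absolute value at least `β`, which gives the bound
`min (β²/(2(σ₁+σ₂))) (β²/(2(σ₁-σ₂)))`.
-/

open Matrix Filter Topology

noncomputable def invCirculantQuad (σ1 σ2 x y : ℝ) : ℝ :=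
  (x + y) ^ 2 / (2 * (σ1 + σ2)) + (x - y) ^ 2 / (2 * (σ1 - σ2))

section
variable {σ1 σ2 : ℝ}

lemma add_pos_and_sub_pos_of_posDef
    (h : (!![σ1, σ2; σ2, σ1] : Matrix (Fin 2) (Fin 2) ℝ).PosDef) :
    0 < σ1 + σ2 ∧ 0 < σ1 - σ2 := by
  have hσ1 : 0 < σ1 := h.diag_pos (i := 0)
  have hdet : 0 < σ1 * σ1 - σ2 * σ2 := det_fin_two_of σ1 σ2 σ2 σ1 ▸ h.det_pos
  constructor <;> nlinarith

lemma inv_circulant_two : (!![σ1, σ2; σ2, σ1] : Matrix (Fin 2) (Fin 2) ℝ)⁻¹ =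
    (σ1 * σ1 - σ2 * σ2)⁻¹ • !![σ1, -σ2; -σ2, σ1] := by
  rw [inv_def, det_fin_two_of, adjugate_fin_two_of, Ring.inverse_eq_inv']

lemma dotProduct_inv_circulant_mulVec (hadd : σ1 + σ2 ≠ 0) (hsub : σ1 - σ2 ≠ 0) (w : Fin 2 → ℝ) :
    w ⬝ᵥ (!![σ1, σ2; σ2, σ1] : Matrix (Fin 2) (Fin 2) ℝ)⁻¹ *ᵥ w =
      invCirculantQuad σ1 σ2 (w 0) (w 1) := by
  rw [inv_circulant_two, invCirculantQuad,
    show σ1 * σ1 - σ2 * σ2 = (σ1 + σ2) * (σ1 - σ2) by ring]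
  simp only [dotProduct, mulVec, Matrix.smul_apply, of_apply, cons_val', cons_val_fin_one,
    smul_eq_mul, Fin.sum_univ_two, cons_val_zero, cons_val_one]
  field_simp
  ring

lemma invCirculantQuad_nonneg (hadd : 0 < σ1 + σ2) (hsub : 0 < σ1 - σ2) (x y : ℝ) :
    0 ≤ invCirculantQuad σ1 σ2 x y := by
  unfold invCirculantQuad; positivity

lemma sq_div_le_invCirculantQuad (hadd : 0 < σ1 + σ2) (hsub : 0 < σ1 - σ2) (x y : ℝ) :
    x ^ 2 / σ1 ≤ invCirculantQuad σ1 σ2 x y := by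
  have hσ1 : 0 < σ1 := by linarith
  rw [invCirculantQuad, div_add_div _ _ (by positivity) (by positivity),
    div_le_div_iff₀ hσ1 (by positivity)]
  nlinarith [sq_nonneg (σ2 * x - σ1 * y)]

-- `σ2 x / σ1` is the conditional mean of the second Gaussian coordinate given the first.
lemma invCirculantQuad_conditional_mean (hσ1 : σ1 ≠ 0) (x : ℝ) :
    invCirculantQuad σ1 σ2 x (σ2 * x / σ1) = x ^ 2 / σ1 := by
  rw [invCirculantQuad]
  field_simp
  ring

lemma min_le_invCirculantQuad_sub_of_abs_lt (hadd : 0 < σ1 + σ2) (hsub : 0 < σ1 - σ2)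
    {β x y : ℝ} (hβ : 0 ≤ β) (hxy : |x| < |y|) :
    min (β ^ 2 / (2 * (σ1 + σ2))) (β ^ 2 / (2 * (σ1 - σ2))) ≤
      invCirculantQuad σ1 σ2 (x - β) y := by
  rcases le_or_gt 0 y with hy | hy
  · rw [abs_of_nonneg hy] at hxy
    have : β ^ 2 ≤ (x - β - y) ^ 2 := by nlinarith [le_abs_self x]
    calc _ ≤ β ^ 2 / (2 * (σ1 - σ2)) := min_le_right _ _
      _ ≤ (x - β - y) ^ 2 / (2 * (σ1 - σ2)) := by gcongr
      _ ≤ _ := le_add_of_nonneg_left (by positivity)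
  · rw [abs_of_neg hy] at hxy
    have : β ^ 2 ≤ (x - β + y) ^ 2 := by nlinarith [le_abs_self x]
    calc _ ≤ β ^ 2 / (2 * (σ1 + σ2)) := min_le_left _ _
      _ ≤ (x - β + y) ^ 2 / (2 * (σ1 + σ2)) := by gcongr
      _ ≤ _ := le_add_of_nonneg_right (by positivity)

lemma le_sq_div_of_forall_pos_le {s β c : ℝ} (h : ∀ δ > 0, s ≤ (β + δ) ^ 2 / c) :
    s ≤ β ^ 2 / c := by
  have hT : Tendsto (fun δ : ℝ => (β + δ) ^ 2 / c) (𝓝[>] 0) (𝓝 (β ^ 2 / c)) := by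
    have : Continuous fun δ : ℝ => (β + δ) ^ 2 / c := by fun_prop
    simpa using (this.tendsto 0).mono_left nhdsWithin_le_nhds
  exact ge_of_tendsto hT (eventually_mem_nhdsWithin.mono h)

theorem sInf_invCirculantQuad_image_strip_union_cone (hadd : 0 < σ1 + σ2)
    (hsub : 0 < σ1 - σ2) {β t : ℝ} (ht : 0 ≤ t) (htβ : t < β) :
    sInf ((fun v : Fin 2 → ℝ => invCirculantQuad σ1 σ2 (v 0 - β) (v 1)) ''
        {v | |v 0| ≤ t ∨ |v 0| < |v 1|}) =
      min (min ((β - t) ^ 2 / σ1) (β ^ 2 / (2 * (σ1 + σ2)))) (β ^ 2 / (2 * (σ1 - σ2))) := by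
  set A : Set (Fin 2 → ℝ) := {v | |v 0| ≤ t ∨ |v 0| < |v 1|}
  set f := fun v : Fin 2 → ℝ => invCirculantQuad σ1 σ2 (v 0 - β) (v 1)
  have hbdd : BddBelow (f '' A) :=
    ⟨0, by rintro _ ⟨v, -, rfl⟩; exact invCirculantQuad_nonneg hadd hsub _ _⟩
  have hle : ∀ x y, (|x| ≤ t ∨ |x| < |y|) → sInf (f '' A) ≤ invCirculantQuad σ1 σ2 (x - β) y :=
    fun x y h => csInf_le hbdd ⟨![x, y], h, rfl⟩
  -- The cone is open, so its infimum is only approached, from the points `((β - δ)/2, ∓(β + δ)/2)`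
  -- near the tangency points `(β/2, ∓β/2)`.
  have hcone : ∀ δ > 0, |(β - δ) / 2| < |(β + δ) / 2| := fun δ hδ => by
    rw [abs_of_pos (by linarith : 0 < (β + δ) / 2), abs_lt]; constructor <;> linarith
  apply le_antisymm
  · refine le_min (le_min ?_ ?_) ?_
    · have := hle t (σ2 * (t - β) / σ1) (.inl (abs_of_nonneg ht).le)
      rwa [invCirculantQuad_conditional_mean (by linarith), ← neg_sub, neg_sq] at this
    · refine le_sq_div_of_forall_pos_le fun δ hδ => ?_
      have := hle ((β - δ) / 2) (-((β + δ) / 2)) (.inr (by rw [abs_neg]; exact hcone δ hδ))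
      convert this using 1
      rw [invCirculantQuad]; ring_nf
    · refine le_sq_div_of_forall_pos_le fun δ hδ => ?_
      have := hle ((β - δ) / 2) ((β + δ) / 2) (.inr (hcone δ hδ))
      convert this using 1
      rw [invCirculantQuad]; ring_nf
  · refine le_csInf ⟨_, ![t, 0], .inl (by simp [abs_of_nonneg ht]), rfl⟩ ?_
    rintro _ ⟨v, hv | hv, rfl⟩
    · have : (β - t) ^ 2 ≤ (v 0 - β) ^ 2 := by nlinarith [le_abs_self (v 0)]
      calc _ ≤ (β - t) ^ 2 / σ1 := min_le_of_left_le (min_le_left _ _)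
        _ ≤ (v 0 - β) ^ 2 / σ1 := by gcongr; linarith
        _ ≤ f v := sq_div_le_invCirculantQuad hadd hsub _ _
    · exact (min_le_min_right _ (min_le_right _ _)).trans
        (min_le_invCirculantQuad_sub_of_abs_lt hadd hsub (ht.trans htβ.le) hv)

end

/-- For `Σ = [[σ₁,σ₂],[σ₂,σ₁]]` positive definite and mean `(β,0)` with
`β = √(2r log p)`, the infimum of the Mahalanobis squared distance over
`S = {(x,y) : |x| ≤ √(2u log p) or |x| < |y|}` is
`2 log p · min{(√r−√u)₊²/σ₁, r/(2(σ₁+σ₂)), r/(2(σ₁−σ₂))}` when `r > u`. -/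
theorem stmt13 (σ1 σ2 r u : ℝ) (p : ℝ) (hp : 1 < p)
    (hpd : (!![σ1, σ2; σ2, σ1] : Matrix (Fin 2) (Fin 2) ℝ).PosDef)
    (hu : 0 < u) (hur : u < r) :
    letI S : Matrix (Fin 2) (Fin 2) ℝ := !![σ1, σ2; σ2, σ1]
    letI β : ℝ := Real.sqrt (2 * r * Real.log p)
    letI t : ℝ := Real.sqrt (2 * u * Real.log p)
    letI μ : Fin 2 → ℝ := ![β, 0]
    letI Q : (Fin 2 → ℝ) → ℝ := fun v => (v - μ) ⬝ᵥ (S⁻¹).mulVec (v - μ)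
    letI A : Set (Fin 2 → ℝ) := {v | |v 0| ≤ t ∨ |v 0| < |v 1|}
    sInf (Q '' A) = 2 * Real.log p *
      min (min ((max (Real.sqrt r - Real.sqrt u) 0) ^ 2 / σ1) (r / (2 * (σ1 + σ2))))
        (r / (2 * (σ1 - σ2))) := by
  obtain ⟨hadd, hsub⟩ := add_pos_and_sub_pos_of_posDef hpd
  have hL : 0 < 2 * Real.log p := by linarith [Real.log_pos hp]
  set β := √(2 * r * Real.log p)
  set t := √(2 * u * Real.log p)
  have hβ : β = √(2 * Real.log p) * √r := by
    rw [← Real.sqrt_mul hL.le, mul_right_comm]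
  have ht : t = √(2 * Real.log p) * √u := by
    rw [← Real.sqrt_mul hL.le, mul_right_comm]
  have hsqrt : √u < √r := Real.sqrt_lt_sqrt hu.le hur
  have htβ : t < β := by rw [hβ, ht]; gcongr
  have hβt_sq : (β - t) ^ 2 = 2 * Real.log p * (√r - √u) ^ 2 := by
    rw [hβ, ht, ← mul_sub, mul_pow, Real.sq_sqrt hL.le]
  have hβ_sq : β ^ 2 = 2 * Real.log p * r := by
    rw [hβ, mul_pow, Real.sq_sqrt hL.le, Real.sq_sqrt (hu.trans hur).le]
  simp only [dotProduct_inv_circulant_mulVec hadd.ne' hsub.ne', Pi.sub_apply, cons_val_zero,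
    cons_val_one, sub_zero]
  refine (sInf_invCirculantQuad_image_strip_union_cone hadd hsub (Real.sqrt_nonneg _) htβ).trans
    ?_
  rw [max_eq_left (sub_nonneg.2 hsqrt.le), hβt_sq, hβ_sq, mul_min_of_nonneg _ _ hL.le,
    mul_min_of_nonneg _ _ hL.le]
  simp only [mul_div_assoc]
end

section
/- Let μ ∈ ℝ^d, Σ ∈ ℝ^{d×d} symmetric positive definite, and S ⊂ ℝ^d open with μ ∉ S and b := inf_{x∈S} (x−μ)ᵀΣ⁻¹(x−μ) < ∞. Suppose X_p ~ N_d(μ, Σ/(2 log p)) for each p ≥ 2. Then for every ε > 0, p^{b−ε}·P(X_p ∈ S) → 0 and p^{b+ε}·P(X_p ∈ S) → ∞ as p → ∞; i.e., P(X_p ∈ S) = p^{−b + o(1)}. -/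
open Matrix MeasureTheory Filter

open Real Metric Set Topology

/-!
Write `q x = (x - μ)ᵀ Σ⁻¹ (x - μ)` and `t = log p`. The density of `X_p` is
`c (2t)^{d/2} exp (-t q)`, and `p^{±ε} = exp (±ε t)` beats the polynomial prefactor, so
everything reduces to the Laplace integral `J t = ∫_A exp (-t q)`. Since `q ≥ b` on `A`,
`exp (-t q) ≤ exp (-(t - 1) b) exp (-q)` there, whence `J t ≤ e^b e^{-bt} ∫ exp (-q)`.
Conversely, `A` is open and `q` continuous, so `q < b + δ` for some `δ < ε` on an open subset
of `A` of finite positive volume `V`, whence `J t ≥ V e^{-(b + δ) t}`.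
-/

lemma integrable_exp_neg_mul_norm_sq {E : Type*} [NormedAddCommGroup E] [NormedSpace ℝ E]
    [FiniteDimensional ℝ E] [MeasurableSpace E] [BorelSpace E] (μ : Measure E)
    [μ.IsAddHaarMeasure] {α : ℝ} (hα : 0 < α) :
    Integrable (fun x => exp (-α * ‖x‖ ^ 2)) μ := by
  rcases subsingleton_or_nontrivial E with hE | hE
  · refine (integrable_const (1 : ℝ)).mono' (by fun_prop) (.of_forall fun x => ?_)
    rw [norm_of_nonneg (exp_pos _).le, exp_le_one_iff]
    nlinarith [sq_nonneg ‖x‖]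
  · rw [integrable_fun_norm_addHaar μ (f := fun y => exp (-α * y ^ 2))]
    have := integrableOn_rpow_mul_exp_neg_mul_sq hα (s := (Module.finrank ℝ E - 1 : ℕ))
      (by linarith [(Nat.cast_nonneg _ : (0 : ℝ) ≤ (Module.finrank ℝ E - 1 : ℕ))])
    simpa only [rpow_natCast, smul_eq_mul] using this

lemma exists_pos_mul_norm_sq_le_dotProduct_mulVec {n : Type*} [Fintype n] {M : Matrix n n ℝ}
    (hM : M.PosDef) : ∃ α > 0, ∀ x : n → ℝ, α * ‖x‖ ^ 2 ≤ x ⬝ᵥ M *ᵥ x := by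
  obtain ⟨α, hα, hαsphere⟩ : ∃ α > 0, ∀ y ∈ sphere (0 : n → ℝ) 1, α ≤ y ⬝ᵥ M *ᵥ y := by
    rcases (sphere (0 : n → ℝ) 1).eq_empty_or_nonempty with h | h
    · exact ⟨1, one_pos, by simp [h]⟩
    · obtain ⟨z, hz, hmin⟩ := (isCompact_sphere (0 : n → ℝ) 1).exists_isMinOn h
        (by fun_prop : Continuous fun x : n → ℝ => x ⬝ᵥ M *ᵥ x).continuousOn
      exact ⟨_, by simpa using hM.dotProduct_mulVec_pos (ne_zero_of_mem_unit_sphere ⟨z, hz⟩), hmin⟩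
  refine ⟨α, hα, fun x => ?_⟩
  rcases eq_or_ne x 0 with rfl | hx
  · simp
  have hxn : 0 < ‖x‖ := norm_pos_iff.2 hx
  have h := hαsphere (‖x‖⁻¹ • x) (by simp [norm_smul, hxn.ne'])
  rw [smul_dotProduct, mulVec_smul, dotProduct_smul, smul_eq_mul, smul_eq_mul] at h
  calc α * ‖x‖ ^ 2 ≤ ‖x‖⁻¹ * (‖x‖⁻¹ * (x ⬝ᵥ M *ᵥ x)) * ‖x‖ ^ 2 := by gcongr
    _ = x ⬝ᵥ M *ᵥ x := by field_simp

lemma integrable_exp_neg_dotProduct_mulVec {n : Type*} [Fintype n] {M : Matrix n n ℝ}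
    (hM : M.PosDef) (m : n → ℝ) :
    Integrable (fun x : n → ℝ => exp (-((x - m) ⬝ᵥ M *ᵥ (x - m)))) := by
  obtain ⟨α, hα, hquad⟩ := exists_pos_mul_norm_sq_le_dotProduct_mulVec hM
  have : Integrable (fun x : n → ℝ => exp (-(x ⬝ᵥ M *ᵥ x))) :=
    (integrable_exp_neg_mul_norm_sq volume hα).mono' (by fun_prop) (.of_forall fun x => by
      rw [norm_of_nonneg (exp_pos _).le, exp_le_exp]
      linarith [hquad x])
  exact this.comp_sub_right m

lemma inv_sqrt_mul_det_inv_smul {n : Type*} [Fintype n] [DecidableEq n] (S : Matrix n n ℝ)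
    (c : ℝ) {a : ℝ} (ha : 0 < a) :
    (√(c * (a⁻¹ • S).det))⁻¹ = a ^ ((Fintype.card n : ℝ) / 2) * (√(c * S.det))⁻¹ := by
  rw [det_smul, mul_left_comm, sqrt_mul (by positivity), mul_inv, sqrt_eq_rpow, ← rpow_natCast,
    ← rpow_mul (inv_nonneg.2 ha.le), inv_rpow ha.le, inv_inv, mul_one_div]

lemma rpow_mul_setIntegral_inv_sqrt_det_mul_exp_neg_log_mul {X : Type*} [MeasurableSpace X]
    (ν : Measure X) (A : Set X) (g : X → ℝ) {n : Type*} [Fintype n] [DecidableEq n]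
    (S : Matrix n n ℝ) (c : ℝ) {p : ℝ} (hp : 1 < p) (s : ℝ) :
    p ^ s * ∫ x in A, (√(c * ((2 * log p)⁻¹ • S).det))⁻¹ * exp (-log p * g x) ∂ν =
      (√(c * S.det))⁻¹ * 2 ^ ((Fintype.card n : ℝ) / 2) *
        (log p ^ ((Fintype.card n : ℝ) / 2) *
          (exp (s * log p) * ∫ x in A, exp (-log p * g x) ∂ν)) := by
  have hlog : 0 < log p := log_pos hp
  rw [integral_const_mul, inv_sqrt_mul_det_inv_smul S c (by positivity),
    mul_rpow zero_le_two hlog.le, rpow_def_of_pos (by linarith), mul_comm (log p) s]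
  ring

section Laplace

variable {X : Type*} [MeasurableSpace X] {μ : Measure X} {q : X → ℝ} {A : Set X} {b : ℝ}

lemma integrable_exp_neg_mul (hq : Measurable q) (hq0 : ∀ x, 0 ≤ q x)
    (hint : Integrable (fun x => exp (-q x)) μ) {t : ℝ} (ht : 1 ≤ t) :
    Integrable (fun x => exp (-t * q x)) μ :=
  hint.mono' (by fun_prop) (.of_forall fun x => by
    rw [norm_of_nonneg (exp_pos _).le, exp_le_exp]
    nlinarith [hq0 x])

lemma setIntegral_exp_neg_mul_le (hA : MeasurableSet A) (hint : Integrable (fun x => exp (-q x)) μ)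
    (hbA : ∀ x ∈ A, b ≤ q x) {t : ℝ} (ht : 1 ≤ t) :
    ∫ x in A, exp (-t * q x) ∂μ ≤ exp (-(t - 1) * b) * ∫ x, exp (-q x) ∂μ := by
  calc ∫ x in A, exp (-t * q x) ∂μ ≤ ∫ x in A, exp (-(t - 1) * b) * exp (-q x) ∂μ := by
        refine integral_mono_of_nonneg (.of_forall fun x => (exp_pos _).le)
          (hint.integrableOn.const_mul _) ((ae_restrict_iff' hA).2 (.of_forall fun x hx => ?_))
        dsimp only
        rw [← exp_add, exp_le_exp]
        nlinarith [hbA x hx]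
    _ ≤ exp (-(t - 1) * b) * ∫ x, exp (-q x) ∂μ := by
        rw [integral_const_mul]
        exact mul_le_mul_of_nonneg_left
          (setIntegral_le_integral hint (.of_forall fun x => (exp_pos _).le)) (exp_pos _).le

lemma tendsto_rpow_mul_exp_mul_setIntegral_exp_neg_mul_nhds_zero (hA : MeasurableSet A)
    (hint : Integrable (fun x => exp (-q x)) μ) (hbA : ∀ x ∈ A, b ≤ q x) (s : ℝ) {ε : ℝ}
    (hε : 0 < ε) :
    Tendsto (fun t => t ^ s * (exp ((b - ε) * t) * ∫ x in A, exp (-t * q x) ∂μ)) atTop (𝓝 0) := by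
  have hbound := (tendsto_rpow_mul_exp_neg_mul_atTop_nhds_zero s ε hε).mul_const
    (exp b * ∫ x, exp (-q x) ∂μ)
  rw [zero_mul] at hbound
  refine squeeze_zero' ?_ ?_ hbound
  · filter_upwards [eventually_ge_atTop 0] with t ht
    have := setIntegral_nonneg (μ := μ) hA fun x _ => (exp_pos (-t * q x)).le
    positivity
  · filter_upwards [eventually_ge_atTop 1] with t ht
    calc t ^ s * (exp ((b - ε) * t) * ∫ x in A, exp (-t * q x) ∂μ)
        ≤ t ^ s * (exp ((b - ε) * t) * (exp (-(t - 1) * b) * ∫ x, exp (-q x) ∂μ)) := by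
          gcongr
          exact setIntegral_exp_neg_mul_le hA hint hbA ht
      _ = t ^ s * exp (-ε * t) * (exp b * ∫ x, exp (-q x) ∂μ) := by
          rw [← mul_assoc (exp _), ← exp_add, show (b - ε) * t + -(t - 1) * b = -ε * t + b by ring, exp_add]
          ring

variable [TopologicalSpace X] [OpensMeasurableSpace X] [μ.IsOpenPosMeasure]
  [IsLocallyFiniteMeasure μ]

lemma exists_pos_mul_exp_le_setIntegral_exp_neg_mul (hq : Continuous q) (hA : IsOpen A)
    {x₀ : X} (hx₀ : x₀ ∈ A) {c : ℝ} (hc : q x₀ < c) :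
    ∃ V > 0, ∀ t ≥ 0, IntegrableOn (fun x => exp (-t * q x)) A μ →
      V * exp (-t * c) ≤ ∫ x in A, exp (-t * q x) ∂μ := by
  obtain ⟨W, hx₀W, hW, hWfin⟩ := μ.exists_isOpen_measure_lt_top x₀
  set B := A ∩ q ⁻¹' Iio c ∩ W
  have hB : IsOpen B := (hA.inter (isOpen_Iio.preimage hq)).inter hW
  have hBfin : μ B ≠ ⊤ := (measure_inter_lt_top_of_right_ne_top hWfin.ne).ne
  refine ⟨μ.real B, ENNReal.toReal_pos (hB.measure_ne_zero μ ⟨x₀, ⟨hx₀, hc⟩, hx₀W⟩) hBfin,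
    fun t ht hint => ?_⟩
  have hBA : B ⊆ A := fun x hx => hx.1.1
  calc μ.real B * exp (-t * c) ≤ ∫ x in B, exp (-t * q x) ∂μ := by
        rw [mul_comm]
        refine setIntegral_ge_of_const_le_real hB.measurableSet hBfin (fun x hx => ?_)
          (hint.mono_set hBA)
        have : q x < c := hx.1.2
        rw [exp_le_exp]
        nlinarith
    _ ≤ ∫ x in A, exp (-t * q x) ∂μ :=
        setIntegral_mono_set hint (.of_forall fun x => (exp_pos _).le) hBA.eventuallyLE

lemma tendsto_rpow_mul_exp_mul_setIntegral_exp_neg_mul_atTop (hq : Continuous q)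
    (hq0 : ∀ x, 0 ≤ q x) (hint : Integrable (fun x => exp (-q x)) μ) (hA : IsOpen A) {x₀ : X}
    (hx₀ : x₀ ∈ A) {c : ℝ} (hc : q x₀ < c) {s : ℝ} (hs : 0 ≤ s) :
    Tendsto (fun t => t ^ s * (exp (c * t) * ∫ x in A, exp (-t * q x) ∂μ)) atTop atTop := by
  obtain ⟨c', hqc', hc'⟩ := exists_between hc
  obtain ⟨V, hV, hVJ⟩ := exists_pos_mul_exp_le_setIntegral_exp_neg_mul (μ := μ) hq hA hx₀ hqc'
  have hgrowth : Tendsto (fun t => V * exp ((c - c') * t)) atTop atTop :=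
    (tendsto_exp_atTop.comp (tendsto_id.const_mul_atTop (sub_pos.2 hc'))).const_mul_atTop hV
  refine tendsto_atTop_mono' atTop ?_ hgrowth
  filter_upwards [eventually_ge_atTop 1] with t ht
  have hJ := hVJ t (by linarith) (integrable_exp_neg_mul hq.measurable hq0 hint ht).integrableOn
  calc V * exp ((c - c') * t) = exp (c * t) * (V * exp (-t * c')) := by
        rw [mul_left_comm, ← exp_add]
        ring_nf
    _ ≤ exp (c * t) * ∫ x in A, exp (-t * q x) ∂μ := by gcongr
    _ ≤ t ^ s * (exp (c * t) * ∫ x in A, exp (-t * q x) ∂μ) :=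
        le_mul_of_one_le_left (by positivity [hJ, hV]) (one_le_rpow ht hs)

end Laplace

theorem stmt14_general {d : ℕ} (μ : Fin d → ℝ) (S : Matrix (Fin d) (Fin d) ℝ)
    (hpd : S.PosDef)
    (A : Set (Fin d → ℝ)) (hA : IsOpen A) (hne : A.Nonempty)
    (b : ℝ) (hb : b = sInf ((fun x => (x - μ) ⬝ᵥ (S⁻¹).mulVec (x - μ)) '' A))
    (ε : ℝ) (hε : 0 < ε) :
    letI f : ℕ → (Fin d → ℝ) → ℝ := fun p x =>
      (Real.sqrt ((2 * Real.pi) ^ d * ((2 * Real.log p)⁻¹ • S).det))⁻¹ *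
        Real.exp (-(Real.log p) * ((x - μ) ⬝ᵥ (S⁻¹).mulVec (x - μ)))
    Tendsto (fun p : ℕ => (p : ℝ) ^ (b - ε) * ∫ x in A, f p x) atTop (nhds 0) ∧
    Tendsto (fun p : ℕ => (p : ℝ) ^ (b + ε) * ∫ x in A, f p x) atTop atTop := by
  set q : (Fin d → ℝ) → ℝ := fun x => (x - μ) ⬝ᵥ S⁻¹ *ᵥ (x - μ)
  have hq0 (x) : 0 ≤ q x := by
    simpa only [star_trivial] using hpd.inv.posSemidef.dotProduct_mulVec_nonneg (x - μ)
  have hqc : Continuous q := by fun_prop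
  have hint : Integrable fun x => exp (-q x) := integrable_exp_neg_dotProduct_mulVec hpd.inv μ
  have hbA : ∀ x ∈ A, b ≤ q x := fun x hx =>
    hb ▸ csInf_le ⟨0, by rintro _ ⟨y, -, rfl⟩; exact hq0 y⟩ ⟨x, hx, rfl⟩
  obtain ⟨x₀, hx₀A, hx₀⟩ : ∃ x ∈ A, q x < b + ε := by
    obtain ⟨_, ⟨x, hx, rfl⟩, h⟩ :=
      exists_lt_of_csInf_lt (hne.image q) (show sInf (q '' A) < b + ε by linarith)
    exact ⟨x, hx, h⟩
  set C := (√((2 * π) ^ d * S.det))⁻¹ * 2 ^ ((d : ℝ) / 2)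
  have hC : 0 < C := by have := hpd.det_pos; positivity
  have hlog : Tendsto (fun p : ℕ => log p) atTop atTop :=
    tendsto_log_atTop.comp tendsto_natCast_atTop_atTop
  have hf : ∀ᶠ p : ℕ in atTop, ∀ s : ℝ,
      (p : ℝ) ^ s * ∫ x in A, (√((2 * π) ^ d * ((2 * log p)⁻¹ • S).det))⁻¹ * exp (-log p * q x) =
        C * ((log p) ^ ((d : ℝ) / 2) * (exp (s * log p) * ∫ x in A, exp (-log p * q x))) := by
    filter_upwards [eventually_gt_atTop 1] with p hp s
    simpa only [Fintype.card_fin] using rpow_mul_setIntegral_inv_sqrt_det_mul_exp_neg_log_mul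
      volume A q S _ (Nat.one_lt_cast.2 hp) s
  constructor
  · refine (mul_zero C ▸ ((tendsto_rpow_mul_exp_mul_setIntegral_exp_neg_mul_nhds_zero
      hA.measurableSet hint hbA ((d : ℝ) / 2) hε).comp hlog).const_mul C).congr' ?_
    filter_upwards [hf] with p hp using (hp _).symm
  · refine (((tendsto_rpow_mul_exp_mul_setIntegral_exp_neg_mul_atTop hqc hq0 hint hA hx₀A hx₀
      (s := (d : ℝ) / 2) (by positivity)).comp hlog).const_mul_atTop hC).congr' ?_
    filter_upwards [hf] with p hp using (hp _).symm

/-- Fixed-parameter large deviation asymptotics for a Gaussian vector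
`X_p ~ N_d(μ, Σ/(2 log p))` (represented by its Lebesgue density): for an open set `S`
with `μ ∉ S` and `b = inf_{x ∈ S} (x−μ)ᵀΣ⁻¹(x−μ)`, one has
`p^{b−ε}·P(X_p ∈ S) → 0` and `p^{b+ε}·P(X_p ∈ S) → ∞` for every `ε > 0`. -/
theorem stmt14 {d : ℕ} (μ : Fin d → ℝ) (S : Matrix (Fin d) (Fin d) ℝ)
    (hpd : S.PosDef) (hsym : S.IsSymm)
    (A : Set (Fin d → ℝ)) (hA : IsOpen A) (hμ : μ ∉ A) (hne : A.Nonempty)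
    (b : ℝ) (hb : b = sInf ((fun x => (x - μ) ⬝ᵥ (S⁻¹).mulVec (x - μ)) '' A))
    (ε : ℝ) (hε : 0 < ε) :
    letI f : ℕ → (Fin d → ℝ) → ℝ := fun p x =>
      (Real.sqrt ((2 * Real.pi) ^ d * ((2 * Real.log p)⁻¹ • S).det))⁻¹ *
        Real.exp (-(Real.log p) * ((x - μ) ⬝ᵥ (S⁻¹).mulVec (x - μ)))
    Tendsto (fun p : ℕ => (p : ℝ) ^ (b - ε) * ∫ x in A, f p x) atTop (nhds 0) ∧
    Tendsto (fun p : ℕ => (p : ℝ) ^ (b + ε) * ∫ x in A, f p x) atTop atTop :=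
  stmt14_general μ S hpd A hA hne b hb ε hε
end

section
/- Let h ∈ ℝ² and Σ = [[1, ρ],[ρ, 1]] with 0 ≤ ρ < 1, and let M(h) denote the value of λ at which the first coordinate enters the solution path of the bivariate Lasso argmin_b { −hᵀb + bᵀΣb/2 + λ‖b‖₁ }. Then for h in the region A₅ = {h : h₂ > 0, ρh₂ < h₁ < h₂}, M(h) = (h₁ − ρh₂)/(1 − ρ), and for h in A₆ = {h : h₂ > 0, −h₂ < h₁ < ρh₂}, M(h) = |h₁ − ρh₂|/(1 + ρ). -/
/-!
With a positive definite Gram matrix `S` the Lasso objective is strictly convex, and a point `b`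
with `S b + λ s = h`, where `s` is a subgradient of `‖·‖₁` at `b`, is its unique minimiser: at any
`u` the objective exceeds its value at `b` by `(u - b)ᵀ S (u - b) / 2 + λ (‖u‖₁ - sᵀu)`.

For `S = [[1, ρ], [ρ, 1]]` and `|h 0| < h 1` the stationary point is explicit: it is `0` for
`λ ≥ h 1`, it is `(0, h 1 - λ)` while `|h 0 - ρ (h 1 - λ)| ≤ λ`, and below that both coordinates
are nonzero, the first with the sign of `h 0 - ρ h 1`. So the first coordinate is nonzero exactly
for `λ < max ((h 0 - ρ h 1) / (1 - ρ)) ((ρ h 1 - h 0) / (1 + ρ))`.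
-/

open Matrix

section Lasso

variable {n : Type*} [Fintype n]

noncomputable def lassoObjective (S : Matrix n n ℝ) (h : n → ℝ) (lam : ℝ) (b : n → ℝ) : ℝ :=
  -(h ⬝ᵥ b) + b ⬝ᵥ (S *ᵥ b) / 2 + lam * ∑ i, |b i|

theorem lassoObjective_sub_of_stationary {S : Matrix n n ℝ} (hS : S.IsSymm) {h b s : n → ℝ}
    {lam : ℝ} (hb : S *ᵥ b + lam • s = h) (hs : s ⬝ᵥ b = ∑ i, |b i|) (u : n → ℝ) :
    lassoObjective S h lam u - lassoObjective S h lam b =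
      (u - b) ⬝ᵥ (S *ᵥ (u - b)) / 2 + lam * (∑ i, |u i| - s ⬝ᵥ u) := by
  have hsymm : b ⬝ᵥ (S *ᵥ u) = u ⬝ᵥ (S *ᵥ b) := by
    rw [dotProduct_mulVec, ← mulVec_transpose, hS.eq, dotProduct_comm]
  have hhu : h ⬝ᵥ u = u ⬝ᵥ (S *ᵥ b) + lam * (s ⬝ᵥ u) := by
    rw [← hb, add_dotProduct, smul_dotProduct, smul_eq_mul, dotProduct_comm]
  have hhb : h ⬝ᵥ b = b ⬝ᵥ (S *ᵥ b) + lam * (s ⬝ᵥ b) := by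
    rw [← hb, add_dotProduct, smul_dotProduct, smul_eq_mul, dotProduct_comm]
  simp only [lassoObjective, mulVec_sub, sub_dotProduct, dotProduct_sub, hhu, hhb, hs]
  linear_combination hsymm / 2

theorem eq_of_lassoObjective_le_of_stationary {S : Matrix n n ℝ} (hS : S.PosDef)
    {h b s u : n → ℝ} {lam : ℝ} (hlam : 0 ≤ lam) (hb : S *ᵥ b + lam • s = h)
    (hs_le : ∀ i, |s i| ≤ 1) (hs : ∀ i, s i * b i = |b i|)
    (hu : lassoObjective S h lam u ≤ lassoObjective S h lam b) : u = b := by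
  have hsub := lassoObjective_sub_of_stationary (isHermitian_iff_isSymm.1 hS.isHermitian) hb
    (Finset.sum_congr rfl fun i _ => hs i) u
  have hsu : s ⬝ᵥ u ≤ ∑ i, |u i| := Finset.sum_le_sum fun i _ =>
    calc s i * u i ≤ |s i * u i| := le_abs_self _
      _ = |s i| * |u i| := abs_mul _ _
      _ ≤ |u i| := mul_le_of_le_one_left (abs_nonneg _) (hs_le i)
  by_contra hne
  have hquad : 0 < (u - b) ⬝ᵥ (S *ᵥ (u - b)) := hS.dotProduct_mulVec_pos (sub_ne_zero.2 hne)
  nlinarith [mul_nonneg hlam (sub_nonneg.2 hsu)]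

theorem eq_zero_of_lassoObjective_le {S : Matrix n n ℝ} (hS : S.PosDef) {h b : n → ℝ}
    {lam : ℝ} (hlam : 0 < lam) (hh : ∀ i, |h i| ≤ lam)
    (hb : lassoObjective S h lam b ≤ lassoObjective S h lam 0) : b = 0 := by
  refine eq_of_lassoObjective_le_of_stationary hS hlam.le (s := lam⁻¹ • h) ?_ (fun i => ?_)
    (fun i => by simp) hb
  · rw [mulVec_zero, zero_add, smul_inv_smul₀ hlam.ne']
  · rw [Pi.smul_apply, smul_eq_mul, abs_mul, abs_inv, abs_of_pos hlam]
    exact inv_mul_le_one_of_le₀ (hh i) hlam.le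

end Lasso

def corrMatrix (ρ : ℝ) : Matrix (Fin 2) (Fin 2) ℝ := !![1, ρ; ρ, 1]

theorem posDef_corrMatrix {ρ : ℝ} (hρ : |ρ| < 1) : (corrMatrix ρ).PosDef := by
  refine .of_dotProduct_mulVec_pos ?_ fun x hx => ?_
  · ext i j
    fin_cases i <;> fin_cases j <;> rfl
  · have hρ2 : 0 < 1 - ρ ^ 2 := by nlinarith [abs_nonneg ρ, sq_abs ρ]
    have hquad : star x ⬝ᵥ (corrMatrix ρ *ᵥ x) = (x 0 + ρ * x 1) ^ 2 + (1 - ρ ^ 2) * x 1 ^ 2 := by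
      simp [corrMatrix, dotProduct, mulVec, Fin.sum_univ_two]
      ring
    rw [hquad]
    rcases eq_or_ne (x 1) 0 with h1 | h1
    · have h0 : x 0 ≠ 0 := fun h0 => hx (funext (Fin.forall_fin_two.2 ⟨h0, h1⟩))
      simpa [h1] using sq_pos_of_ne_zero h0
    · positivity

theorem lassoObjective_fin_two (S : Matrix (Fin 2) (Fin 2) ℝ) (h : Fin 2 → ℝ) (lam : ℝ)
    (b : Fin 2 → ℝ) :
    lassoObjective S h lam b = -(h ⬝ᵥ b) + b ⬝ᵥ (S *ᵥ b) / 2 + lam * (|b 0| + |b 1|) := by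
  rw [lassoObjective, Fin.sum_univ_two]

section CorrLasso

variable {ρ lam : ℝ} {h b : Fin 2 → ℝ}

local notation "f" => lassoObjective (corrMatrix ρ) h lam

theorem corrLasso_eq_of_stationary (hρ : |ρ| < 1) (hlam : 0 ≤ lam) {x y s₀ s₁ : ℝ}
    (hs₀ : |s₀| ≤ 1) (hs₁ : |s₁| ≤ 1) (hx : s₀ * x = |x|) (hy : s₁ * y = |y|)
    (e₀ : x + ρ * y + lam * s₀ = h 0) (e₁ : ρ * x + y + lam * s₁ = h 1)
    (hb : f b ≤ f ![x, y]) : b = ![x, y] := by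
  refine eq_of_lassoObjective_le_of_stationary (posDef_corrMatrix hρ) hlam (s := ![s₀, s₁])
    ?_ (Fin.forall_fin_two.2 ⟨hs₀, hs₁⟩) (Fin.forall_fin_two.2 ⟨hx, hy⟩) hb
  ext i
  fin_cases i <;> simp [corrMatrix, ← e₀, ← e₁, mul_comm ρ]

theorem corrLasso_fst_pos (hρ : |ρ| < 1) (hlam : 0 < lam) (hh : h 0 ≤ h 1)
    (hlt : lam * (1 - ρ) < h 0 - ρ * h 1) (hb : ∀ u, f b ≤ f u) : 0 < b 0 := by
  obtain ⟨hρ₀, hρ₁⟩ := abs_lt.1 hρ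
  have hden : 0 < 1 - ρ ^ 2 := by nlinarith
  have hx : 0 < (h 0 - ρ * h 1 - lam * (1 - ρ)) / (1 - ρ ^ 2) := div_pos (by linarith) hden
  have hy : 0 < (h 1 - ρ * h 0 - lam * (1 - ρ)) / (1 - ρ ^ 2) :=
    div_pos (by nlinarith) hden
  rw [corrLasso_eq_of_stationary hρ hlam.le (s₀ := 1) (s₁ := 1) (by simp) (by simp)
    (by rw [one_mul, abs_of_pos hx]) (by rw [one_mul, abs_of_pos hy])
    (by field_simp; ring) (by field_simp; ring) (hb _)]
  exact hx

theorem corrLasso_fst_neg (hρ : |ρ| < 1) (hlam : 0 < lam) (hh : -h 1 ≤ h 0)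
    (hlt : lam * (1 + ρ) < ρ * h 1 - h 0) (hb : ∀ u, f b ≤ f u) : b 0 < 0 := by
  obtain ⟨hρ₀, hρ₁⟩ := abs_lt.1 hρ
  have hden : 0 < 1 - ρ ^ 2 := by nlinarith
  have hx : (h 0 - ρ * h 1 + lam * (1 + ρ)) / (1 - ρ ^ 2) < 0 :=
    div_neg_of_neg_of_pos (by linarith) hden
  have hy : 0 < (h 1 - ρ * h 0 - lam * (1 + ρ)) / (1 - ρ ^ 2) :=
    div_pos (by nlinarith) hden
  rw [corrLasso_eq_of_stationary hρ hlam.le (s₀ := -1) (s₁ := 1) (by simp) (by simp)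
    (by rw [abs_of_neg hx]; ring) (by rw [one_mul, abs_of_pos hy])
    (by field_simp; ring) (by field_simp; ring) (hb _)]
  exact hx

theorem corrLasso_fst_eq_zero (hρ : |ρ| < 1) (hlam : 0 < lam) (hlt : lam < h 1)
    (hle : |h 0 - ρ * (h 1 - lam)| ≤ lam) (hb : ∀ u, f b ≤ f u) : b 0 = 0 := by
  rw [corrLasso_eq_of_stationary hρ hlam.le (s₀ := (h 0 - ρ * (h 1 - lam)) / lam) (s₁ := 1)
    (by rwa [abs_div, abs_of_pos hlam, div_le_one hlam]) (by simp) (by simp)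
    (by rw [one_mul, abs_of_pos (sub_pos.2 hlt)])
    (by field_simp; ring) (by ring) (hb ![0, h 1 - lam])]
  rfl

end CorrLasso

theorem sSup_setOf_pos_and_eq_of_iff_lt {p : ℝ → Prop} {M : ℝ} (hM : 0 ≤ M)
    (hp : ∀ x, 0 < x → (p x ↔ x < M)) : sSup {x | 0 < x ∧ p x} = M := by
  have hset : {x | 0 < x ∧ p x} = Set.Ioo 0 M := by
    ext x
    exact and_congr_right (hp x)
  rw [hset]
  rcases hM.eq_or_lt with rfl | hM
  · rw [Set.Ioo_self, Real.sSup_empty]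
  · exact csSup_Ioo hM

theorem corrLasso_sSup_fst_ne_zero {ρ : ℝ} (hρ : |ρ| < 1) {h : Fin 2 → ℝ} (hh : |h 0| < h 1)
    {bhat : ℝ → Fin 2 → ℝ}
    (hmin : ∀ lam, 0 < lam → ∀ b,
      lassoObjective (corrMatrix ρ) h lam (bhat lam) ≤ lassoObjective (corrMatrix ρ) h lam b) :
    sSup {lam | 0 < lam ∧ bhat lam 0 ≠ 0} =
      max ((h 0 - ρ * h 1) / (1 - ρ)) ((ρ * h 1 - h 0) / (1 + ρ)) := by
  obtain ⟨hρ₀, hρ₁⟩ := abs_lt.1 hρ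
  obtain ⟨hh₀, hh₁⟩ := abs_lt.1 hh
  have hpos : 0 < 1 - ρ := by linarith
  have hneg : 0 < 1 + ρ := by linarith
  refine sSup_setOf_pos_and_eq_of_iff_lt ?_ fun lam hlam => ⟨fun hne => ?_, fun hlt => ?_⟩
  · rcases le_total 0 (h 0 - ρ * h 1) with hd | hd
    · exact le_max_of_le_left (div_nonneg hd hpos.le)
    · exact le_max_of_le_right (div_nonneg (by linarith) hneg.le)
  · by_contra! hge
    rw [max_le_iff, div_le_iff₀ hpos, div_le_iff₀ hneg] at hge
    rcases lt_or_ge lam (h 1) with hlt | hge₁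
    · exact hne (corrLasso_fst_eq_zero hρ hlam hlt
        (abs_le.2 ⟨by linarith, by linarith⟩) (hmin lam hlam))
    · exact hne (congrFun (eq_zero_of_lassoObjective_le (posDef_corrMatrix hρ) hlam
        (Fin.forall_fin_two.2 ⟨abs_le.2 ⟨by linarith, by linarith⟩,
          abs_le.2 ⟨by linarith, by linarith⟩⟩) (hmin lam hlam 0)) 0)
  · rcases lt_max_iff.1 hlt with hlt | hlt
    · rw [lt_div_iff₀ hpos] at hlt
      exact (corrLasso_fst_pos hρ hlam hh₁.le hlt (hmin lam hlam)).ne'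
    · rw [lt_div_iff₀ hneg] at hlt
      exact (corrLasso_fst_neg hρ hlam (by linarith) hlt (hmin lam hlam)).ne

/-- For the bivariate Lasso with Gram matrix `[[1,ρ],[ρ,1]]`, `0 ≤ ρ < 1`, the value
`M(h)` at which variable 1 enters the solution path satisfies: in region
`A₅ = {h : h₂ > 0, ρh₂ < h₁ < h₂}`, `M(h) = (h₁ − ρh₂)/(1 − ρ)`; in region
`A₆ = {h : h₂ > 0, −h₂ < h₁ < ρh₂}`, `M(h) = |h₁ − ρh₂|/(1 + ρ)`. -/
theorem stmt18 (ρ : ℝ) (hρ0 : 0 ≤ ρ) (hρ1 : ρ < 1) (h : Fin 2 → ℝ)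
    (bhat : ℝ → Fin 2 → ℝ)
    (hmin : ∀ lam : ℝ, 0 < lam → ∀ b : Fin 2 → ℝ,
      -(h ⬝ᵥ bhat lam) +
          (bhat lam) ⬝ᵥ ((!![1, ρ; ρ, 1] : Matrix (Fin 2) (Fin 2) ℝ).mulVec (bhat lam)) / 2
          + lam * (|bhat lam 0| + |bhat lam 1|)
        ≤ -(h ⬝ᵥ b) + b ⬝ᵥ ((!![1, ρ; ρ, 1] : Matrix (Fin 2) (Fin 2) ℝ).mulVec b) / 2
          + lam * (|b 0| + |b 1|)) :
    (0 < h 1 ∧ ρ * h 1 < h 0 ∧ h 0 < h 1 →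
      sSup {lam | 0 < lam ∧ bhat lam 0 ≠ 0} = (h 0 - ρ * h 1) / (1 - ρ)) ∧
    (0 < h 1 ∧ -(h 1) < h 0 ∧ h 0 < ρ * h 1 →
      sSup {lam | 0 < lam ∧ bhat lam 0 ≠ 0} = |h 0 - ρ * h 1| / (1 + ρ)) := by
  have hρ : |ρ| < 1 := abs_lt.2 ⟨by linarith, hρ1⟩
  have hpos : 0 < 1 - ρ := by linarith
  have hneg : 0 < 1 + ρ := by linarith
  have hmin' : ∀ lam, 0 < lam → ∀ b,
      lassoObjective (corrMatrix ρ) h lam (bhat lam) ≤ lassoObjective (corrMatrix ρ) h lam b :=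
    fun lam hlam b => by
      rw [lassoObjective_fin_two, lassoObjective_fin_two]
      exact hmin lam hlam b
  constructor
  · rintro ⟨h1pos, hlo, hhi⟩
    rw [corrLasso_sSup_fst_ne_zero hρ (abs_lt.2 ⟨by nlinarith, hhi⟩) hmin', max_eq_left]
    exact (div_nonpos_of_nonpos_of_nonneg (by linarith) hneg.le).trans
      (div_nonneg (by linarith) hpos.le)
  · rintro ⟨h1pos, hlo, hhi⟩
    rw [corrLasso_sSup_fst_ne_zero hρ (abs_lt.2 ⟨hlo, by nlinarith⟩) hmin', max_eq_right,
      abs_sub_comm, abs_of_pos (by linarith)]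
    exact (div_nonpos_of_nonpos_of_nonneg (by linarith) hpos.le).trans
      (div_nonneg (by linarith) hneg.le)
end
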